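/- arXiv:1508.05555 — 8 statements merged into one kernel-verified Lean document; each statement's English description precedes it below -/
import Mathlib

section
/- Let n ≥ 2 and let f be a fixed-point-free involution on ZMod (2n). For any two chords c = {a, f a} and d = {b, f b} with disjoint endpoint sets, exactly one of b, f b lies in the open arc from a to f a if and only if exactly one of a, f a lies in the open arc from b to f b. In other words, the linking relation on chords of a chord diagram is symmetric. -/
/-- The open arc from `u` to `v` on the cyclic set `ZMod N`: the points
`u+1, u+2, …, v-1` reached from `u` by repeatedly adding `1` before reaching `v`. -/
def openArc {N : ℕ} (u v : ZMod N) : Set (ZMod N) :=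
  {w | 0 < (w - u).val ∧ (w - u).val < (v - u).val}

/-- For a chord diagram given by the fixed-point-free involution `f`, the chord
`{b, f b}` is linked with the chord `{a, f a}` if exactly one of `b`, `f b`
lies in the open arc from `a` to `f a`. -/
def Linked {N : ℕ} (f : ZMod N → ZMod N) (a b : ZMod N) : Prop :=
  Xor' (b ∈ openArc a (f a)) (f b ∈ openArc a (f a))

/-!
The open arc from `u` to `v` is the set of points strictly between `u` and `v` in Mathlib's
circular order on `ZMod N`, the one induced by the linear order of the representatives
`0, …, N - 1`. Linking of the chords `{a, a'}` and `{b, b'}` thus becomes a statement about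
four points of a linearly ordered set, and its symmetry is a finite check of their relative
positions.
-/

section LinearOrder

attribute [local instance] LT.toSBtw

theorem xor_sbtw_comm {α : Type*} [LinearOrder α] {a a' b b' : α}
    (hab : a ≠ b) (ha'b' : a' ≠ b') :
    Xor (sbtw a b a') (sbtw a b' a') ↔ Xor (sbtw b a b') (sbtw b a' b') := by
  simp only [sbtw_iff, Xor]
  grind

end LinearOrder

theorem ZMod.xor_sbtw_comm {N : ℕ} {a a' b b' : ZMod N} (hab : a ≠ b) (ha'b' : a' ≠ b') :
    Xor (sbtw a b a') (sbtw a b' a') ↔ Xor (sbtw b a b') (sbtw b a' b') := by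
  cases N
  · exact _root_.xor_sbtw_comm (α := ℤ) hab ha'b'
  · exact _root_.xor_sbtw_comm (α := Fin _) hab ha'b'

theorem Fin.val_sub_eq_ite {n : ℕ} (a b : Fin n) :
    (a - b).val = if b ≤ a then a.val - b.val else n + a.val - b.val := by
  split_ifs with h
  · exact Fin.sub_val_of_le h
  · exact Fin.coe_sub_iff_lt.mpr (not_le.mp h)

theorem Fin.sbtw_iff_val_sub {n : ℕ} {u v w : Fin n} :
    sbtw u w v ↔ 0 < (w - u).val ∧ (w - u).val < (v - u).val := by
  rw [Fin.sbtw_iff, Fin.val_sub_eq_ite, Fin.val_sub_eq_ite]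
  simp only [Fin.le_def, Fin.lt_def]
  have := u.isLt; have := v.isLt; have := w.isLt
  split_ifs <;> omega

theorem ZMod.mem_openArc_iff_sbtw {N : ℕ} [NeZero N] {u v w : ZMod N} :
    w ∈ openArc u v ↔ sbtw u w v := by
  obtain ⟨m, rfl⟩ := Nat.exists_eq_add_one_of_ne_zero (NeZero.ne N)
  exact Fin.sbtw_iff_val_sub.symm

theorem linking_symmetric_general (n : ℕ) (hn : 2 ≤ n)
    (f : ZMod (2 * n) → ZMod (2 * n))
    (a b : ZMod (2 * n))
    (hdisj : Disjoint ({a, f a} : Set (ZMod (2 * n))) ({b, f b} : Set (ZMod (2 * n)))) :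
    Linked f a b ↔ Linked f b a := by
  have : NeZero (2 * n) := ⟨by omega⟩
  have hab : a ≠ b := hdisj.ne_of_mem (by simp) (by simp)
  have hfab : f a ≠ f b := hdisj.ne_of_mem (by simp) (by simp)
  simp only [Linked, ZMod.mem_openArc_iff_sbtw]
  exact ZMod.xor_sbtw_comm hab hfab

/-- For any two chords `c = {a, f a}` and `d = {b, f b}` of a chord diagram with
disjoint endpoint sets, `d` is linked with `c` if and only if `c` is linked with `d`:
the linking relation on chords is symmetric. -/
theorem linking_symmetric (n : ℕ) (hn : 2 ≤ n)
    (f : ZMod (2 * n) → ZMod (2 * n))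
    (hinv : Function.Involutive f) (hfpf : ∀ x, f x ≠ x)
    (a b : ZMod (2 * n))
    (hdisj : Disjoint ({a, f a} : Set (ZMod (2 * n))) ({b, f b} : Set (ZMod (2 * n)))) :
    Linked f a b ↔ Linked f b a :=
  linking_symmetric_general n hn f a b hdisj
end

section
/- Let n ≥ 1 and let f be a fixed-point-free involution on ZMod (2n). Then the number of Gaussian-odd chords of the chord diagram f is even. -/
/-- The number of chords of the chord diagram `f` linked with the chord `{a, f a}`. -/
noncomputable def linkedCount {N : ℕ} (f : ZMod N → ZMod N) (a : ZMod N) : ℕ :=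
  Set.ncard {d : Set (ZMod N) | ∃ b, d = {b, f b} ∧ Linked f a b}

/-- The chord `{a, f a}` is Gaussian-even: the number of chords linked with it is even. -/
def GaussEven {N : ℕ} (f : ZMod N → ZMod N) (a : ZMod N) : Prop :=
  Even (linkedCount f a)

theorem eq_or_eq_apply_of_pair_eq {α : Type*} {f : α → α} {a b : α}
    (h : ({a, f a} : Set α) = {b, f b}) : b = a ∨ b = f a := by
  rcases Set.pair_eq_pair_iff.1 h with ⟨rfl, -⟩ | ⟨-, rfl⟩ <;> simp

theorem ZMod.val_sub_add_val {N : ℕ} [NeZero N] (x y : ZMod N) :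
    (x - y).val + y.val = x.val ∨ (x - y).val + y.val = x.val + N := by
  rcases lt_or_ge ((x - y).val + y.val) N with h | h
  · left; rw [← ZMod.val_add_of_lt h, sub_add_cancel]
  · right; rw [ZMod.val_add_val_of_le h, sub_add_cancel]

theorem mem_openArc_iff {N : ℕ} [NeZero N] {u v w : ZMod N} :
    w ∈ openArc u v ↔ u.val < w.val ∧ w.val < v.val ∨ v.val < u.val ∧ u.val < w.val ∨
      w.val < v.val ∧ v.val < u.val := by
  have hw := ZMod.val_sub_add_val w u
  have hv := ZMod.val_sub_add_val v u
  have := ZMod.val_lt (w - u); have := ZMod.val_lt (v - u)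
  have := ZMod.val_lt u; have := ZMod.val_lt v; have := ZMod.val_lt w
  simp only [openArc, Set.mem_ofPred_eq]
  omega

section Linked

variable {N : ℕ} {f : ZMod N → ZMod N}

theorem linked_iff_xor {a b : ZMod N} :
    Linked f a b ↔ Xor (b ∈ openArc a (f a)) (f b ∈ openArc a (f a)) :=
  Iff.rfl

theorem not_linked_self (a : ZMod N) : ¬ Linked f a a := by
  simp [linked_iff_xor, openArc]

theorem not_linked_apply_self (hf : Function.Involutive f) (a : ZMod N) :
    ¬ Linked f a (f a) := by
  simp [linked_iff_xor, openArc, hf a]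

theorem linked_apply_right_iff (hf : Function.Involutive f) (a b : ZMod N) :
    Linked f a (f b) ↔ Linked f a b := by
  rw [linked_iff_xor, linked_iff_xor, hf b, xor_comm]

theorem linked_comm [NeZero N] (hf : Function.Involutive f) (hfix : ∀ x, f x ≠ x)
    (a b : ZMod N) : Linked f a b ↔ Linked f b a := by
  by_cases hba : b = a
  · rw [hba]
  by_cases hbfa : b = f a
  · subst hbfa
    simpa [not_linked_apply_self hf, hf a] using not_linked_apply_self hf (f a)
  have hfbfa : f b ≠ f a := hf.injective.ne hba
  have hfba : f b ≠ a := fun h => hbfa (by rw [← h, hf b])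
  have hval {x y : ZMod N} (h : x ≠ y) : x.val ≠ y.val := (ZMod.val_injective N).ne h
  have := hval hba; have := hval hbfa; have := hval hfbfa; have := hval hfba
  have := hval (hfix a); have := hval (hfix b)
  simp only [linked_iff_xor, xor_def, mem_openArc_iff]
  omega

theorem linked_apply_left_iff [NeZero N] (hf : Function.Involutive f) (hfix : ∀ x, f x ≠ x)
    (a b : ZMod N) : Linked f (f a) b ↔ Linked f a b := by
  rw [linked_comm hf hfix, linked_apply_right_iff hf, linked_comm hf hfix]

theorem linked_congr_left [NeZero N] (hf : Function.Involutive f) (hfix : ∀ x, f x ≠ x)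
    {a a' b : ZMod N} (h : ({a, f a} : Set (ZMod N)) = {a', f a'}) :
    Linked f a' b ↔ Linked f a b := by
  rcases eq_or_eq_apply_of_pair_eq h with rfl | rfl
  exacts [Iff.rfl, linked_apply_left_iff hf hfix a b]

end Linked

section ChordGraph

variable {N : ℕ} {f : ZMod N → ZMod N}

def chords (f : ZMod N → ZMod N) : Set (Set (ZMod N)) :=
  {d | ∃ a, d = {a, f a}}

variable [NeZero N] (hf : Function.Involutive f) (hfix : ∀ x, f x ≠ x)

/-- The circle graph of the chord diagram `f`. -/
def chordGraph : SimpleGraph (chords f) where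
  Adj d e := ∃ a b, d.1 = {a, f a} ∧ e.1 = {b, f b} ∧ Linked f a b
  symm := ⟨fun _ _ ⟨a, b, hd, he, h⟩ => ⟨b, a, he, hd, (linked_comm hf hfix a b).1 h⟩⟩
  loopless := ⟨fun _ ⟨_, _, hd, hd', h⟩ => by
    rcases eq_or_eq_apply_of_pair_eq (hd.symm.trans hd') with rfl | rfl
    exacts [not_linked_self _ h, not_linked_apply_self hf _ h]⟩

theorem chordGraph_adj_iff {a : ZMod N} {e : chords f} :
    (chordGraph hf hfix).Adj ⟨{a, f a}, a, rfl⟩ e ↔ ∃ b, e.1 = {b, f b} ∧ Linked f a b := by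
  constructor
  · rintro ⟨a', b, ha, he, h⟩
    exact ⟨b, he, (linked_congr_left hf hfix ha).1 h⟩
  · rintro ⟨b, he, h⟩
    exact ⟨a, b, rfl, he, h⟩

theorem chordGraph_degree (a : ZMod N)
    [Fintype ((chordGraph hf hfix).neighborSet ⟨{a, f a}, a, rfl⟩)] :
    (chordGraph hf hfix).degree ⟨{a, f a}, a, rfl⟩ = linkedCount f a := by
  rw [← SimpleGraph.card_neighborSet_eq_degree, ← Nat.card_eq_fintype_card,
    Nat.card_coe_set_eq, linkedCount, ← Set.ncard_image_of_injective _ Subtype.val_injective]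
  congr 1
  ext d
  simp only [Set.mem_image, SimpleGraph.mem_neighborSet, chordGraph_adj_iff, Set.mem_ofPred_eq]
  constructor
  · rintro ⟨e, ⟨b, he, h⟩, rfl⟩
    exact ⟨b, he, h⟩
  · rintro ⟨b, rfl, h⟩
    exact ⟨⟨{b, f b}, b, rfl⟩, ⟨b, rfl, h⟩, rfl⟩

theorem ncard_not_gaussEven_eq_card_odd_degree [Fintype (chords f)]
    [DecidableRel (chordGraph hf hfix).Adj] :
    {d : Set (ZMod N) | ∃ a, d = {a, f a} ∧ ¬ GaussEven f a}.ncard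
      = (Finset.univ.filter fun v => Odd ((chordGraph hf hfix).degree v)).card := by
  rw [← Set.ncard_coe_finset, Finset.coe_filter,
    ← Set.ncard_image_of_injective _ Subtype.val_injective]
  congr 1
  ext d
  simp only [Set.mem_image, Finset.mem_univ, true_and, Set.mem_ofPred_eq]
  constructor
  · rintro ⟨a, rfl, h⟩
    refine ⟨⟨{a, f a}, a, rfl⟩, ?_, rfl⟩
    rwa [chordGraph_degree, ← Nat.not_even_iff_odd]
  · rintro ⟨⟨_, a, rfl⟩, h, rfl⟩
    refine ⟨a, rfl, ?_⟩
    rwa [GaussEven, ← chordGraph_degree hf hfix, Nat.not_even_iff_odd]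

end ChordGraph

/-- The number of Gaussian-odd chords of a chord diagram is even. -/
theorem even_number_of_odd_chords (n : ℕ) (hn : 1 ≤ n)
    (f : ZMod (2 * n) → ZMod (2 * n))
    (hinv : Function.Involutive f) (hfpf : ∀ x, f x ≠ x) :
    Even (Set.ncard {d : Set (ZMod (2 * n)) | ∃ a, d = {a, f a} ∧ ¬ GaussEven f a}) := by
  have : NeZero (2 * n) := ⟨by omega⟩
  classical
  rw [ncard_not_gaussEven_eq_card_odd_degree hinv hfpf]
  exact (chordGraph hinv hfpf).even_card_odd_degree_vertices
end

section
/- Let n ≥ 3 and let f be a fixed-point-free involution on ZMod (2n). Suppose a, a+1, b, b+1, c, c+1 are six pairwise distinct points occurring in this cyclic order, and f (a+1) = b, f (b+1) = c, f (c+1) = a. Let f' be the fixed-point-free involution agreeing with f outside {a, a+1, b, b+1, c, c+1} and satisfying f' a = b+1, f' b = c+1, f' c = a+1. Then the Gaussian parity of the chord {a+1, b} in f equals the Gaussian parity of the chord {a, b+1} in f', the Gaussian parity of {b+1, c} in f equals that of {b, c+1} in f', and the Gaussian parity of {c+1, a} in f equals that of {c, a+1} in f'. (This verifies parity axiom 3a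 for the Gaussian parity: under a third Reidemeister move each of the three corresponding crossings keeps its parity.) -/
lemma zval_add_one {N : ℕ} [NeZero N] (x : ZMod N) : (x + 1).val = (x.val + 1) % N := by
  have hx : ((x.val : ℕ) : ZMod N) = x := ZMod.natCast_rightInverse x
  rw [show x + 1 = ((x.val + 1 : ℕ) : ZMod N) by rw [Nat.cast_add, Nat.cast_one, hx],
    ZMod.val_natCast]

lemma zval_sub_wrap {N : ℕ} [NeZero N] (x y : ZMod N) (h : x.val < y.val) :
    (x - y).val = x.val + N - y.val := by
  have hx : ((x.val : ℕ) : ZMod N) = x := ZMod.natCast_rightInverse x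
  have hy : ((y.val : ℕ) : ZMod N) = y := ZMod.natCast_rightInverse y
  have hyN : y.val < N := ZMod.val_lt y
  have key : ((x.val + N - y.val : ℕ) : ZMod N) = x - y := by
    have e : x.val + N - y.val = x.val + (N - y.val) := by omega
    rw [e, Nat.cast_add, Nat.cast_sub hyN.le, ZMod.natCast_self, hx, hy]
    ring
  rw [← key, ZMod.val_natCast, Nat.mod_eq_of_lt (by omega)]

lemma cyc_basic (n : ℕ) (hn : 3 ≤ n) (a b c : ZMod (2 * n))
    (hcyc : 1 < (b - a).val ∧ (b - a).val < (b + 1 - a).val ∧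
      (b + 1 - a).val < (c - a).val ∧ (c - a).val < (c + 1 - a).val) :
    2 ≤ (b - a).val ∧ (b + 1 - a).val = (b - a).val + 1 ∧
      (b - a).val + 2 ≤ (c - a).val ∧ (c + 1 - a).val = (c - a).val + 1 ∧
      (c - a).val + 2 ≤ 2 * n := by
  haveI : NeZero (2 * n) := ⟨by omega⟩
  obtain ⟨h1, h2, h3, h4⟩ := hcyc
  have hbe : b + 1 - a = (b - a) + 1 := by ring
  have hce : c + 1 - a = (c - a) + 1 := by ring
  have hβN : (b - a).val < 2 * n := ZMod.val_lt _
  have hγN : (c - a).val < 2 * n := ZMod.val_lt _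
  have hγ1N : (c + 1 - a).val < 2 * n := ZMod.val_lt _
  have e1 : (b + 1 - a).val = ((b - a).val + 1) % (2 * n) := by rw [hbe, zval_add_one]
  have e2 : (c + 1 - a).val = ((c - a).val + 1) % (2 * n) := by rw [hce, zval_add_one]
  have m1 : ((b - a).val + 1) % (2 * n) = (b - a).val + 1 ∨
      ((b - a).val + 1) % (2 * n) = 0 := by
    rcases Nat.lt_or_ge ((b - a).val + 1) (2 * n) with h | h
    · exact Or.inl (Nat.mod_eq_of_lt h)
    · right; rw [show (b - a).val + 1 = 2 * n by omega, Nat.mod_self]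
  have m2 : ((c - a).val + 1) % (2 * n) = (c - a).val + 1 ∨
      ((c - a).val + 1) % (2 * n) = 0 := by
    rcases Nat.lt_or_ge ((c - a).val + 1) (2 * n) with h | h
    · exact Or.inl (Nat.mod_eq_of_lt h)
    · right; rw [show (c - a).val + 1 = 2 * n by omega, Nat.mod_self]
  rw [e1] at h2 h3 ⊢
  rw [e2] at h4 hγ1N ⊢
  rcases m1 with hm1 | hm1 <;> rw [hm1] at h2 h3 ⊢ <;>
    rcases m2 with hm2 | hm2 <;> rw [hm2] at h4 hγ1N ⊢ <;> omega

lemma cyc_rot (n : ℕ) (hn : 3 ≤ n) (a b c : ZMod (2 * n))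
    (hcyc : 1 < (b - a).val ∧ (b - a).val < (b + 1 - a).val ∧
      (b + 1 - a).val < (c - a).val ∧ (c - a).val < (c + 1 - a).val) :
    1 < (c - b).val ∧ (c - b).val < (c + 1 - b).val ∧
      (c + 1 - b).val < (a - b).val ∧ (a - b).val < (a + 1 - b).val := by
  haveI : NeZero (2 * n) := ⟨by omega⟩
  haveI : Fact (1 < 2 * n) := ⟨by omega⟩
  obtain ⟨hβ2, hb1, hβγ, hc1, hγN⟩ := cyc_basic n hn a b c hcyc
  have v1 : (c - b).val = (c - a).val - (b - a).val := by
    rw [show c - b = (c - a) - (b - a) by ring, ZMod.val_sub (by omega)]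
  have v2 : (c + 1 - b).val = (c - a).val + 1 - (b - a).val := by
    rw [show c + 1 - b = (c + 1 - a) - (b - a) by ring,
      ZMod.val_sub (by rw [hc1]; omega), hc1]
  have v3 : (a - b).val = 2 * n - (b - a).val := by
    rw [show a - b = 0 - (b - a) by ring,
      zval_sub_wrap _ _ (by rw [ZMod.val_zero]; omega), ZMod.val_zero]
    omega
  have v4 : (a + 1 - b).val = 2 * n + 1 - (b - a).val := by
    rw [show a + 1 - b = 1 - (b - a) by ring,
      zval_sub_wrap _ _ (by rw [ZMod.val_one]; omega), ZMod.val_one]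
    omega
  rw [v1, v2, v3, v4]
  omega



lemma key_parity (n : ℕ) (hn : 3 ≤ n)
    (f : ZMod (2 * n) → ZMod (2 * n))
    (hinv : Function.Involutive f)
    (a b c : ZMod (2 * n))
    (hcyc : 1 < (b - a).val ∧ (b - a).val < (b + 1 - a).val ∧
      (b + 1 - a).val < (c - a).val ∧ (c - a).val < (c + 1 - a).val)
    (ha : f (a + 1) = b) (hb : f (b + 1) = c) (hc : f (c + 1) = a)
    (f' : ZMod (2 * n) → ZMod (2 * n))
    (hinv' : Function.Involutive f')
    (hout : ∀ x, x ∉ ({a, a + 1, b, b + 1, c, c + 1} : Set (ZMod (2 * n))) → f' x = f x)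
    (ha' : f' a = b + 1) (hb' : f' b = c + 1) (hc' : f' c = a + 1) :
    GaussEven f (a + 1) ↔ GaussEven f' a := by
  haveI : NeZero (2 * n) := ⟨by omega⟩
  haveI : Fact (1 < 2 * n) := ⟨by omega⟩
  obtain ⟨hβ2, pb1, hβγ, pc1, hγN⟩ := cyc_basic n hn a b c hcyc
  -- values of f, f' on the six points
  have hfa : f a = c + 1 := by have := hinv (c + 1); rwa [hc] at this
  have hfb : f b = a + 1 := by have := hinv (a + 1); rwa [ha] at this
  have hfc : f c = b + 1 := by have := hinv (b + 1); rwa [hb] at this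
  have hfb1' : f' (b + 1) = a := by have := hinv' a; rwa [ha'] at this
  have hfc1' : f' (c + 1) = b := by have := hinv' b; rwa [hb'] at this
  have hfa1' : f' (a + 1) = c := by have := hinv' c; rwa [hc'] at this
  -- positions relative to a
  have pa : (a - a).val = 0 := by rw [sub_self, ZMod.val_zero]
  have pa1 : (a + 1 - a).val = 1 := by rw [show a + 1 - a = 1 by ring, ZMod.val_one]
  -- subtracting a+1
  have hv1 : ∀ z : ZMod (2 * n), 1 ≤ (z - a).val →
      (z - (a + 1)).val = (z - a).val - 1 := by
    intro z hz
    rw [show z - (a + 1) = (z - a) - 1 by ring,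
      ZMod.val_sub (by rw [ZMod.val_one]; omega), ZMod.val_one]
  have va : (a - (a + 1)).val = 2 * n - 1 := by
    rw [show a - (a + 1) = 0 - 1 by ring,
      zval_sub_wrap _ _ (by rw [ZMod.val_zero, ZMod.val_one]; omega),
      ZMod.val_zero, ZMod.val_one]
    omega
  -- no special point is in the arc from a+1 to b
  have hnotA : ∀ w, w ∈ ({a, a + 1, b, b + 1, c, c + 1} : Set (ZMod (2 * n))) →
      w ∉ openArc (a + 1) b := by
    intro w hw
    simp only [Set.mem_insert_iff, Set.mem_singleton_iff] at hw
    simp only [openArc, Set.mem_setOf_eq]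
    rw [hv1 b (by omega)]
    rcases hw with h | h | h | h | h | h <;> rw [h]
    · rw [va]; omega
    · rw [sub_self, ZMod.val_zero]; omega
    · rw [hv1 b (by omega)]; omega
    · rw [hv1 (b + 1) (by rw [pb1]; omega), pb1]; omega
    · rw [hv1 c (by omega)]; omega
    · rw [hv1 (c + 1) (by rw [pc1]; omega), pc1]; omega
  -- memberships in the arc from a to b+1
  have hA'a1 : a + 1 ∈ openArc a (b + 1) := by
    simp only [openArc, Set.mem_setOf_eq]; rw [pa1, pb1]; omega
  have hA'b : b ∈ openArc a (b + 1) := by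
    simp only [openArc, Set.mem_setOf_eq]; rw [pb1]; omega
  have hA'a : a ∉ openArc a (b + 1) := by
    simp only [openArc, Set.mem_setOf_eq]; rw [pa]; omega
  have hA'b1 : b + 1 ∉ openArc a (b + 1) := by
    simp only [openArc, Set.mem_setOf_eq]; rw [pb1]; omega
  have hA'c : c ∉ openArc a (b + 1) := by
    simp only [openArc, Set.mem_setOf_eq]; rw [pb1]; omega
  have hA'c1 : c + 1 ∉ openArc a (b + 1) := by
    simp only [openArc, Set.mem_setOf_eq]; rw [pb1, pc1]; omega
  -- no special chord is f-linked with {a+1, b}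
  have notLinkedF : ∀ x, x ∈ ({a, a + 1, b, b + 1, c, c + 1} : Set (ZMod (2 * n))) →
      ¬ Linked f (a + 1) x := by
    intro x hx hL
    have hfx : f x ∈ ({a, a + 1, b, b + 1, c, c + 1} : Set (ZMod (2 * n))) := by
      simp only [Set.mem_insert_iff, Set.mem_singleton_iff] at hx ⊢
      rcases hx with h | h | h | h | h | h <;> rw [h] <;>
        simp [hfa, hfb, hfc, ha, hb, hc]
    unfold Linked Xor' at hL
    rw [ha] at hL
    rcases hL with ⟨h, -⟩ | ⟨h, -⟩
    · exact hnotA x hx h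
    · exact hnotA (f x) hfx h
  -- linkedness of the special chords with {a, b+1} in f'
  have hL'b : Linked f' a b := by
    unfold Linked Xor'; rw [ha', hb']; exact Or.inl ⟨hA'b, hA'c1⟩
  have hL'c1 : Linked f' a (c + 1) := by
    unfold Linked Xor'; rw [ha', hfc1']; exact Or.inr ⟨hA'b, hA'c1⟩
  have hL'c : Linked f' a c := by
    unfold Linked Xor'; rw [ha', hc']; exact Or.inr ⟨hA'a1, hA'c⟩
  have hL'a1 : Linked f' a (a + 1) := by
    unfold Linked Xor'; rw [ha', hfa1']; exact Or.inl ⟨hA'a1, hA'c⟩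
  have hnL'a : ¬ Linked f' a a := by
    unfold Linked Xor'; rw [ha']
    rintro (⟨h, -⟩ | ⟨h, -⟩)
    exacts [hA'a h, hA'b1 h]
  have hnL'b1 : ¬ Linked f' a (b + 1) := by
    unfold Linked Xor'; rw [ha', hfb1']
    rintro (⟨h, -⟩ | ⟨h, -⟩)
    exacts [hA'b1 h, hA'a h]
  -- the two arcs agree away from the four points a, a+1, b, b+1
  have harc : ∀ w : ZMod (2 * n), w ≠ a → w ≠ a + 1 → w ≠ b → w ≠ b + 1 →
      (w ∈ openArc (a + 1) b ↔ w ∈ openArc a (b + 1)) := by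
    intro w h0 h1 h2 h3
    have hnev : ∀ y : ZMod (2 * n), w ≠ y → (w - a).val ≠ (y - a).val := by
      intro y hy h
      exact hy (by have := ZMod.val_injective (2 * n) h
                   simpa using congrArg (· + a) this)
    have k0 := hnev a h0; rw [pa] at k0
    have k1 := hnev (a + 1) h1; rw [pa1] at k1
    have k2 := hnev b h2
    have k3 := hnev (b + 1) h3; rw [pb1] at k3
    simp only [openArc, Set.mem_setOf_eq]
    rw [hv1 w (by omega), hv1 b (by omega), pb1]
    omega
  -- f maps non-special points to non-special points
  have hsix : ∀ x : ZMod (2 * n), x ∉ ({a, a + 1, b, b + 1, c, c + 1} : Set (ZMod (2 * n))) →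
      f x ∉ ({a, a + 1, b, b + 1, c, c + 1} : Set (ZMod (2 * n))) := by
    intro x hx hfx
    apply hx
    have hx2 : x = f (f x) := (hinv x).symm
    simp only [Set.mem_insert_iff, Set.mem_singleton_iff] at hfx ⊢
    rcases hfx with h | h | h | h | h | h <;> rw [h] at hx2 <;>
      simp only [hfa, hfb, hfc, ha, hb, hc] at hx2 <;> tauto
  -- linkedness transfer for non-special chords
  have hLiff : ∀ x, x ∉ ({a, a + 1, b, b + 1, c, c + 1} : Set (ZMod (2 * n))) →
      (Linked f (a + 1) x ↔ Linked f' a x) := by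
    intro x hx
    have hfx6 := hsix x hx
    have hfe : f' x = f x := hout x hx
    simp only [Set.mem_insert_iff, Set.mem_singleton_iff, not_or] at hx hfx6
    unfold Linked
    rw [ha, ha', hfe,
      harc x hx.1 hx.2.1 hx.2.2.1 hx.2.2.2.1,
      harc (f x) hfx6.1 hfx6.2.1 hfx6.2.2.1 hfx6.2.2.2.1]
  -- distinctness facts
  have hneq : ∀ x y : ZMod (2 * n), (x - a).val ≠ (y - a).val → x ≠ y :=
    fun x y h e => h (by rw [e])
  have n_bc : b ≠ c := hneq _ _ (by omega)
  have n_ba1 : b ≠ a + 1 := hneq _ _ (by rw [pa1]; omega)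
  -- the two new chords are not in the old linked set
  have hmemS : ∀ x : ZMod (2 * n), Linked f (a + 1) x →
      x ∉ ({a, a + 1, b, b + 1, c, c + 1} : Set (ZMod (2 * n))) :=
    fun x hL hx => notLinkedF x hx hL
  have hne2 : ({c, a + 1} : Set (ZMod (2 * n))) ∉
      {d : Set (ZMod (2 * n)) | ∃ x, d = ({x, f x} : Set (ZMod (2 * n))) ∧ Linked f (a + 1) x} := by
    rintro ⟨x, hd, hL⟩
    have hx := hmemS x hL
    have hcm : c ∈ ({x, f x} : Set (ZMod (2 * n))) := by
      rw [← hd]; exact Set.mem_insert _ _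
    simp only [Set.mem_insert_iff, Set.mem_singleton_iff] at hcm
    rcases hcm with h | h
    · exact hx (by rw [← h]; simp)
    · have hxe : x = b + 1 := by rw [← hinv x, ← h, hfc]
      exact hx (by rw [hxe]; simp)
  have hne1 : ({b, c + 1} : Set (ZMod (2 * n))) ∉
      insert ({c, a + 1} : Set (ZMod (2 * n)))
        {d : Set (ZMod (2 * n)) | ∃ x, d = ({x, f x} : Set (ZMod (2 * n))) ∧ Linked f (a + 1) x} := by
    intro hmem
    simp only [Set.mem_insert_iff, Set.mem_setOf_eq] at hmem
    rcases hmem with h | ⟨x, hd, hL⟩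
    · have hbm : b ∈ ({c, a + 1} : Set (ZMod (2 * n))) := by
        rw [← h]; exact Set.mem_insert _ _
      simp only [Set.mem_insert_iff, Set.mem_singleton_iff] at hbm
      rcases hbm with h' | h'
      exacts [n_bc h', n_ba1 h']
    · have hx := hmemS x hL
      have hbm : b ∈ ({x, f x} : Set (ZMod (2 * n))) := by
        rw [← hd]; exact Set.mem_insert _ _
      simp only [Set.mem_insert_iff, Set.mem_singleton_iff] at hbm
      rcases hbm with h | h
      · exact hx (by rw [← h]; simp)
      · have hxe : x = a + 1 := by rw [← hinv x, ← h, hfb]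
        exact hx (by rw [hxe]; simp)
  -- the set identity
  have hSeq : {d : Set (ZMod (2 * n)) | ∃ x, d = ({x, f' x} : Set (ZMod (2 * n))) ∧ Linked f' a x} =
      insert ({b, c + 1} : Set (ZMod (2 * n))) (insert ({c, a + 1} : Set (ZMod (2 * n)))
        {d : Set (ZMod (2 * n)) | ∃ x, d = ({x, f x} : Set (ZMod (2 * n))) ∧ Linked f (a + 1) x}) := by
    ext d
    simp only [Set.mem_setOf_eq, Set.mem_insert_iff]
    constructor
    · rintro ⟨x, rfl, hL⟩
      by_cases hx : x ∈ ({a, a + 1, b, b + 1, c, c + 1} : Set (ZMod (2 * n)))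
      · simp only [Set.mem_insert_iff, Set.mem_singleton_iff] at hx
        rcases hx with h | h | h | h | h | h <;> rw [h] at hL ⊢
        · exact absurd hL hnL'a
        · right; left; rw [hfa1']; exact Set.pair_comm _ _
        · left; rw [hb']
        · exact absurd hL hnL'b1
        · right; left; rw [hc']
        · left; rw [hfc1']; exact Set.pair_comm _ _
      · exact Or.inr (Or.inr ⟨x, by rw [hout x hx], (hLiff x hx).mpr hL⟩)
    · rintro (rfl | rfl | ⟨x, rfl, hL⟩)
      · exact ⟨b, by rw [hb'], hL'b⟩
      · exact ⟨c, by rw [hc'], hL'c⟩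
      · by_cases hx : x ∈ ({a, a + 1, b, b + 1, c, c + 1} : Set (ZMod (2 * n)))
        · exact absurd hL (notLinkedF x hx)
        · exact ⟨x, by rw [hout x hx], (hLiff x hx).mp hL⟩
  unfold GaussEven linkedCount
  rw [hSeq, Set.ncard_insert_of_notMem hne1 (Set.toFinite _),
    Set.ncard_insert_of_notMem hne2 (Set.toFinite _)]
  rw [Nat.even_add_one, Nat.even_add_one, not_not]

/-- Third Reidemeister move: the three chords `{a+1, b}`, `{b+1, c}`, `{c+1, a}`,
whose six endpoints occupy three pairs of adjacent points `a, a+1, b, b+1, c, c+1`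
in cyclic order, are replaced by `{a, b+1}`, `{b, c+1}`, `{c, a+1}`.  Each of the
three corresponding chords keeps its Gaussian parity. -/
theorem third_reidemeister_corresponding_parities (n : ℕ) (hn : 3 ≤ n)
    (f : ZMod (2 * n) → ZMod (2 * n))
    (hinv : Function.Involutive f) (hfpf : ∀ x, f x ≠ x)
    (a b c : ZMod (2 * n))
    (hcyc : 1 < (b - a).val ∧ (b - a).val < (b + 1 - a).val ∧
      (b + 1 - a).val < (c - a).val ∧ (c - a).val < (c + 1 - a).val)
    (ha : f (a + 1) = b) (hb : f (b + 1) = c) (hc : f (c + 1) = a)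
    (f' : ZMod (2 * n) → ZMod (2 * n))
    (hinv' : Function.Involutive f') (hfpf' : ∀ x, f' x ≠ x)
    (hout : ∀ x, x ∉ ({a, a + 1, b, b + 1, c, c + 1} : Set (ZMod (2 * n))) → f' x = f x)
    (ha' : f' a = b + 1) (hb' : f' b = c + 1) (hc' : f' c = a + 1) :
    (GaussEven f (a + 1) ↔ GaussEven f' a) ∧
    (GaussEven f (b + 1) ↔ GaussEven f' b) ∧
    (GaussEven f (c + 1) ↔ GaussEven f' c) := by
  have rot1 := cyc_rot n hn a b c hcyc
  have rot2 := cyc_rot n hn b c a rot1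
  have hout2 : ∀ x, x ∉ ({b, b + 1, c, c + 1, a, a + 1} : Set (ZMod (2 * n))) → f' x = f x := by
    intro x hx
    apply hout
    intro h; apply hx
    simp only [Set.mem_insert_iff, Set.mem_singleton_iff] at h ⊢
    tauto
  have hout3 : ∀ x, x ∉ ({c, c + 1, a, a + 1, b, b + 1} : Set (ZMod (2 * n))) → f' x = f x := by
    intro x hx
    apply hout
    intro h; apply hx
    simp only [Set.mem_insert_iff, Set.mem_singleton_iff] at h ⊢
    tauto
  exact ⟨key_parity n hn f hinv a b c hcyc ha hb hc f' hinv' hout ha' hb' hc',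
    key_parity n hn f hinv b c a rot1 hb hc ha f' hinv' hout2 hb' hc' ha',
    key_parity n hn f hinv c a b rot2 hc ha hb f' hinv' hout3 hc' ha' hb'⟩
end

section
/- Let n ≥ 3 and let f be a fixed-point-free involution on ZMod (2n). Suppose a, a+1, b, b+1, c, c+1 are six pairwise distinct points occurring in this cyclic order, with f (a+1) = b, f (b+1) = c, f (c+1) = a, and let f' be the involution agreeing with f outside {a, a+1, b, b+1, c, c+1} and satisfying f' a = b+1, f' b = c+1, f' c = a+1. Then every chord of f whose endpoints avoid {a, a+1, b, b+1, c, c+1} has the same Gaussian parity in f as in f'. (This verifies parity axiom 4 for the Gaussian parity in the case of a third Reidemeister move: crossings not involved in the move keep their parity.) -/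
open Set Function

section CrossingChords

variable {α : Type*}

def crossingChords (f : α → α) (A T : Set α) : Set (Set α) :=
  {d | ∃ y ∈ T, d = {y, f y} ∧ Xor (y ∈ A) (f y ∈ A)}

theorem linkedCount_eq_ncard_crossingChords {N : ℕ} (f : ZMod N → ZMod N) (x : ZMod N) :
    linkedCount f x = (crossingChords f (openArc x (f x)) univ).ncard := by
  simp only [crossingChords, mem_univ, true_and]
  rfl

theorem crossingChords_union (f : α → α) (A T U : Set α) :
    crossingChords f A (T ∪ U) = crossingChords f A T ∪ crossingChords f A U := by
  ext d
  simp only [crossingChords, mem_union, mem_ofPred_eq, or_and_right, exists_or]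

theorem crossingChords_congr {f g : α → α} {T : Set α} (h : EqOn f g T) (A : Set α) :
    crossingChords f A T = crossingChords g A T := by
  ext d
  simp only [crossingChords, mem_ofPred_eq]
  exact exists_congr fun y => and_congr_right fun hy => by rw [h hy]

theorem disjoint_crossingChords_compl {f : α → α} {T : Set α} (hT : MapsTo f T T)
    (A : Set α) : Disjoint (crossingChords f A T) (crossingChords f A Tᶜ) := by
  rw [disjoint_left]
  rintro d ⟨y, hy, rfl, -⟩ ⟨z, hz, hyz, -⟩
  have : z ∈ ({y, f y} : Set α) := hyz ▸ mem_insert z {f z}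
  rcases this with rfl | rfl
  exacts [hz hy, hz (hT hy)]

theorem ncard_crossingChords_univ [Finite α] {f : α → α} {T : Set α} (hT : MapsTo f T T)
    (A : Set α) : (crossingChords f A univ).ncard =
      (crossingChords f A T).ncard + (crossingChords f A Tᶜ).ncard := by
  rw [← union_compl_self T, crossingChords_union]
  exact ncard_union_eq (disjoint_crossingChords_compl hT A) (toFinite _) (toFinite _)

theorem even_ncard_setOf_eq_and_or_eq_and_or_eq_and {β : Type*} {d₁ d₂ d₃ : β} (h₁₂ : d₁ ≠ d₂)
    (h₁₃ : d₁ ≠ d₃) (h₂₃ : d₂ ≠ d₃) (P₁ P₂ P₃ : Prop) :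
    Even {d | (d = d₁ ∧ P₁) ∨ (d = d₂ ∧ P₂) ∨ (d = d₃ ∧ P₃)}.ncard ↔ ¬Xor P₁ (Xor P₂ P₃) := by
  classical
  by_cases h₁ : P₁ <;> by_cases h₂ : P₂ <;> by_cases h₃ : P₃ <;>
    simp [h₁, h₂, h₃, ofPred_or, ncard_insert_of_notMem, Nat.odd_iff, h₁₂.symm, h₁₃.symm, h₂₃.symm]

theorem mapsTo_three_chords {f : α → α} (hf : Involutive f) {p₁ q₁ p₂ q₂ p₃ q₃ : α}
    (h₁ : f p₁ = q₁) (h₂ : f p₂ = q₂) (h₃ : f p₃ = q₃) :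
    MapsTo f {p₁, q₁, p₂, q₂, p₃, q₃} {p₁, q₁, p₂, q₂, p₃, q₃} := by
  rintro y (rfl | rfl | rfl | rfl | rfl | rfl) <;>
    simp [← h₁, ← h₂, ← h₃, hf _]

theorem crossingChords_three {f : α → α} (hf : Involutive f) {p₁ q₁ p₂ q₂ p₃ q₃ : α}
    (h₁ : f p₁ = q₁) (h₂ : f p₂ = q₂) (h₃ : f p₃ = q₃) (A : Set α) :
    crossingChords f A {p₁, q₁, p₂, q₂, p₃, q₃} =
      {d | (d = {p₁, q₁} ∧ Xor (p₁ ∈ A) (q₁ ∈ A)) ∨ (d = {p₂, q₂} ∧ Xor (p₂ ∈ A) (q₂ ∈ A)) ∨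
        (d = {p₃, q₃} ∧ Xor (p₃ ∈ A) (q₃ ∈ A))} := by
  subst h₁ h₂ h₃
  have chord_symm : ∀ y, ({f y, f (f y)} : Set α) = {y, f y} ∧
      (Xor (f y ∈ A) (f (f y) ∈ A) ↔ Xor (y ∈ A) (f y ∈ A)) := fun y => by
    rw [hf y, pair_comm, xor_comm]; simp
  ext d
  simp only [crossingChords, mem_insert_iff, mem_singleton_iff, mem_ofPred_eq]
  constructor
  · rintro ⟨y, hy, rfl, hlink⟩
    rcases hy with rfl | rfl | rfl | rfl | rfl | rfl <;> simp_all
  · rintro (⟨rfl, h⟩ | ⟨rfl, h⟩ | ⟨rfl, h⟩) <;> exact ⟨_, by simp, rfl, h⟩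

theorem even_ncard_crossingChords_univ_iff [Finite α] {f : α → α} (hf : Involutive f)
    {p₁ q₁ p₂ q₂ p₃ q₃ : α} (h₁ : f p₁ = q₁) (h₂ : f p₂ = q₂) (h₃ : f p₃ = q₃)
    (h₁₂ : ({p₁, q₁} : Set α) ≠ {p₂, q₂}) (h₁₃ : ({p₁, q₁} : Set α) ≠ {p₃, q₃})
    (h₂₃ : ({p₂, q₂} : Set α) ≠ {p₃, q₃}) (A : Set α) :
    Even (crossingChords f A univ).ncard ↔
      (¬Xor (Xor (p₁ ∈ A) (q₁ ∈ A)) (Xor (Xor (p₂ ∈ A) (q₂ ∈ A)) (Xor (p₃ ∈ A) (q₃ ∈ A))) ↔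
        Even (crossingChords f A {p₁, q₁, p₂, q₂, p₃, q₃}ᶜ).ncard) := by
  rw [ncard_crossingChords_univ (mapsTo_three_chords hf h₁ h₂ h₃), Nat.even_add,
    crossingChords_three hf h₁ h₂ h₃, even_ncard_setOf_eq_and_or_eq_and_or_eq_and h₁₂ h₁₃ h₂₃]

end CrossingChords

theorem pairs_ne_of_cyclic_order {N : ℕ} [Fact (1 < N)] {a b c : ZMod N}
    (hcyc : 1 < (b - a).val ∧ (b - a).val < (b + 1 - a).val ∧
      (b + 1 - a).val < (c - a).val ∧ (c - a).val < (c + 1 - a).val) :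
    ({a + 1, b} : Set (ZMod N)) ≠ {b + 1, c} ∧ ({a + 1, b} : Set (ZMod N)) ≠ {c + 1, a} ∧
      ({b + 1, c} : Set (ZMod N)) ≠ {c + 1, a} ∧ ({a, b + 1} : Set (ZMod N)) ≠ {b, c + 1} ∧
      ({a, b + 1} : Set (ZMod N)) ≠ {c, a + 1} ∧ ({b, c + 1} : Set (ZMod N)) ≠ {c, a + 1} := by
  have h₀ : (a - a).val = 0 := by simp
  have h₁ : (a + 1 - a).val = 1 := by simp [ZMod.val_one]
  have offset_eq : ∀ p q r s : ZMod N, ({p, q} : Set (ZMod N)) = {r, s} →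
      (p - a).val = (r - a).val ∨ (p - a).val = (s - a).val := by
    intro p q r s h
    rcases pair_eq_pair_iff.1 h with ⟨rfl, -⟩ | ⟨rfl, -⟩ <;> simp
  refine ⟨fun h => ?_, fun h => ?_, fun h => ?_, fun h => ?_, fun h => ?_, fun h => ?_⟩ <;>
    have := offset_eq _ _ _ _ h <;> omega

theorem xor_pairs_comm (P Q R S T U : Prop) :
    Xor (Xor Q R) (Xor (Xor S T) (Xor U P)) ↔ Xor (Xor P S) (Xor (Xor R U) (Xor T Q)) := by
  grind

theorem third_reidemeister_preserves_other_parities_general (n : ℕ) (hn : 3 ≤ n)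
    (f : ZMod (2 * n) → ZMod (2 * n))
    (hinv : Function.Involutive f)
    (a b c : ZMod (2 * n))
    (hcyc : 1 < (b - a).val ∧ (b - a).val < (b + 1 - a).val ∧
      (b + 1 - a).val < (c - a).val ∧ (c - a).val < (c + 1 - a).val)
    (ha : f (a + 1) = b) (hb : f (b + 1) = c) (hc : f (c + 1) = a)
    (f' : ZMod (2 * n) → ZMod (2 * n))
    (hinv' : Function.Involutive f')
    (hout : ∀ x, x ∉ ({a, a + 1, b, b + 1, c, c + 1} : Set (ZMod (2 * n))) → f' x = f x)
    (ha' : f' a = b + 1) (hb' : f' b = c + 1) (hc' : f' c = a + 1) :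
    ∀ x, x ∉ ({a, a + 1, b, b + 1, c, c + 1} : Set (ZMod (2 * n))) →
      f x ∉ ({a, a + 1, b, b + 1, c, c + 1} : Set (ZMod (2 * n))) →
      (GaussEven f x ↔ GaussEven f' x) := by
  intro x hx _
  have : Fact (1 < 2 * n) := ⟨by omega⟩
  obtain ⟨h₁₂, h₁₃, h₂₃, h₁₂', h₁₃', h₂₃'⟩ := pairs_ne_of_cyclic_order hcyc
  have hS : ({a + 1, b, b + 1, c, c + 1, a} : Set (ZMod (2 * n))) =
      {a, a + 1, b, b + 1, c, c + 1} := by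
    ext; simp only [mem_insert_iff, mem_singleton_iff]; tauto
  have hS' : ({a, b + 1, b, c + 1, c, a + 1} : Set (ZMod (2 * n))) =
      {a, a + 1, b, b + 1, c, c + 1} := by
    ext; simp only [mem_insert_iff, mem_singleton_iff]; tauto
  have hagree : EqOn f' f {a, a + 1, b, b + 1, c, c + 1}ᶜ := hout
  rw [GaussEven, GaussEven, linkedCount_eq_ncard_crossingChords,
    linkedCount_eq_ncard_crossingChords, hout x hx,
    even_ncard_crossingChords_univ_iff hinv ha hb hc h₁₂ h₁₃ h₂₃,
    even_ncard_crossingChords_univ_iff hinv' ha' hb' hc' h₁₂' h₁₃' h₂₃', hS, hS',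
    crossingChords_congr hagree, xor_pairs_comm]

/-- Third Reidemeister move: every chord whose endpoints avoid the six points
`a, a+1, b, b+1, c, c+1` involved in the move has the same Gaussian parity before
and after the move. -/
theorem third_reidemeister_preserves_other_parities (n : ℕ) (hn : 3 ≤ n)
    (f : ZMod (2 * n) → ZMod (2 * n))
    (hinv : Function.Involutive f) (hfpf : ∀ x, f x ≠ x)
    (a b c : ZMod (2 * n))
    (hcyc : 1 < (b - a).val ∧ (b - a).val < (b + 1 - a).val ∧
      (b + 1 - a).val < (c - a).val ∧ (c - a).val < (c + 1 - a).val)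
    (ha : f (a + 1) = b) (hb : f (b + 1) = c) (hc : f (c + 1) = a)
    (f' : ZMod (2 * n) → ZMod (2 * n))
    (hinv' : Function.Involutive f') (hfpf' : ∀ x, f' x ≠ x)
    (hout : ∀ x, x ∉ ({a, a + 1, b, b + 1, c, c + 1} : Set (ZMod (2 * n))) → f' x = f x)
    (ha' : f' a = b + 1) (hb' : f' b = c + 1) (hc' : f' c = a + 1) :
    ∀ x, x ∉ ({a, a + 1, b, b + 1, c, c + 1} : Set (ZMod (2 * n))) →
      f x ∉ ({a, a + 1, b, b + 1, c, c + 1} : Set (ZMod (2 * n))) →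
      (GaussEven f x ↔ GaussEven f' x) :=
  third_reidemeister_preserves_other_parities_general n hn f hinv a b c hcyc ha hb hc f' hinv' hout
    ha' hb' hc'
end

section
/- Let n ≥ 3 and let f be a fixed-point-free involution on ZMod (2n). Suppose a, a+1, b, b+1, c, c+1 are six pairwise distinct points occurring in this cyclic order, with f (a+1) = b, f (b+1) = c, f (c+1) = a. Then among the three chords {a+1, b}, {b+1, c}, {c+1, a}, the number of Gaussian-odd ones is even (i.e. equals 0 or 2). (This verifies parity axiom 3b for the Gaussian parity: among the three crossings involved in a third Reidemeister move, the number of odd crossings is even.) -/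
theorem crux_abs (p1 p2 p3 q1 q2 q3 : Prop)
    (d1 : Decidable p1) (d2 : Decidable p2) (d3 : Decidable p3)
    (e1 : Decidable q1) (e2 : Decidable q2) (e3 : Decidable q3)
    (d1' : Decidable (Xor' p1 q1)) (d2' : Decidable (Xor' p2 q2)) (d3' : Decidable (Xor' p3 q3))
    (h : ((if p1 then 1 else 0) + (if p2 then 1 else 0) + (if p3 then 1 else 0) : ℕ) =
         (if q1 then 1 else 0) + (if q2 then 1 else 0) + (if q3 then 1 else 0)) :
    Even ((if Xor' p1 q1 then 1 else 0) + (if Xor' p2 q2 then 1 else 0) +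
      (if Xor' p3 q3 then 1 else 0) : ℕ) := by
  by_cases h1 : p1 <;> by_cases h2 : p2 <;> by_cases h3 : p3 <;>
    by_cases h4 : q1 <;> by_cases h5 : q2 <;> by_cases h6 : q3 <;>
    simp_all [Xor']


/-- Among the three chords `{a+1, b}`, `{b+1, c}`, `{c+1, a}` involved in a third
Reidemeister move, the number of Gaussian-odd ones is even (i.e. equals 0 or 2):
the sum of the three parities is even. -/
theorem third_reidemeister_odd_count_even (n : ℕ) (hn : 3 ≤ n)
    (f : ZMod (2 * n) → ZMod (2 * n))
    (hinv : Function.Involutive f) (hfpf : ∀ x, f x ≠ x)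
    (a b c : ZMod (2 * n))
    (hcyc : 1 < (b - a).val ∧ (b - a).val < (b + 1 - a).val ∧
      (b + 1 - a).val < (c - a).val ∧ (c - a).val < (c + 1 - a).val)
    (ha : f (a + 1) = b) (hb : f (b + 1) = c) (hc : f (c + 1) = a) :
    Even (linkedCount f (a + 1) % 2 + linkedCount f (b + 1) % 2 +
      linkedCount f (c + 1) % 2) := by
  classical
  obtain ⟨h1B, hBB1, hB1C, hCC1⟩ := hcyc
  haveI : NeZero (2 * n) := ⟨by omega⟩
  haveI : Fact (1 < 2 * n) := ⟨by omega⟩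
  have hvlt : ∀ y : ZMod (2 * n), y.val < 2 * n := fun y => ZMod.val_lt y
  have v1 : (1 : ZMod (2 * n)).val = 1 := ZMod.val_one _
  -- subtraction helper
  have hsub : ∀ u v : ZMod (2 * n), (u - v).val = (u.val + (2 * n - v.val)) % (2 * n) := by
    intro u v
    rw [sub_eq_add_neg, ZMod.val_add, ZMod.neg_val']
    simp [Nat.add_mod]
  have hkey : ∀ tv k : ℕ, tv < 2 * n → 0 < k → k < 2 * n →
      (tv + (2 * n - k)) % (2 * n) = if k ≤ tv then tv - k else tv + (2 * n - k) := by
    intro tv k h1 h2 h3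
    split
    · next h =>
      have e : tv + (2 * n - k) = (tv - k) + 2 * n := by omega
      rw [e, Nat.add_mod_right, Nat.mod_eq_of_lt (by omega)]
    · next h => exact Nat.mod_eq_of_lt (by omega)
  set B := (b - a).val with hBdef
  set C := (c - a).val with hCdef
  have hBlt : B < 2 * n := hvlt _
  have hClt : C < 2 * n := hvlt _
  -- values of b+1-a and c+1-a
  have eB1 : (b + 1 - a).val = (B + 1) % (2 * n) := by
    rw [show b + 1 - a = (b - a) + 1 by ring, ZMod.val_add, v1]
  have hB1 : B + 1 < 2 * n ∧ (b + 1 - a).val = B + 1 := by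
    rcases Nat.lt_or_ge (B + 1) (2 * n) with h | h
    · exact ⟨h, by rw [eB1, Nat.mod_eq_of_lt h]⟩
    · exfalso
      have : B + 1 = 2 * n := by omega
      rw [eB1, this, Nat.mod_self] at hBB1
      omega
  have eC1 : (c + 1 - a).val = (C + 1) % (2 * n) := by
    rw [show c + 1 - a = (c - a) + 1 by ring, ZMod.val_add, v1]
  have hC1 : C + 1 < 2 * n ∧ (c + 1 - a).val = C + 1 := by
    rcases Nat.lt_or_ge (C + 1) (2 * n) with h | h
    · exact ⟨h, by rw [eC1, Nat.mod_eq_of_lt h]⟩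
    · exfalso
      have : C + 1 = 2 * n := by omega
      rw [eC1, this, Nat.mod_self] at hCC1
      omega
  rw [hB1.2] at hB1C hBB1
  rw [hC1.2] at hCC1
  -- T values of the six special points
  have Ta : (a - a).val = 0 := by rw [sub_self, ZMod.val_zero]
  have Ta1 : (a + 1 - a).val = 1 := by rw [show a + 1 - a = 1 by ring, v1]
  -- endpoint-difference values for the three arcs
  have arc1v : (b - (a + 1)).val = B - 1 := by
    rw [show b - (a + 1) = (b - a) - 1 by ring, hsub, v1, hkey B 1 hBlt (by omega) (by omega)]
    simp [show 1 ≤ B by omega]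
  have arc2v : (c - (b + 1)).val = C - (B + 1) := by
    rw [show c - (b + 1) = (c - a) - (b + 1 - a) by ring, hsub, hB1.2,
      hkey C (B + 1) hClt (by omega) hB1.1]
    simp [show B + 1 ≤ C by omega]
  have arc3v : (a - (c + 1)).val = 2 * n - (C + 1) := by
    rw [show a - (c + 1) = (a - a) - (c + 1 - a) by ring, hsub, Ta, hC1.2,
      hkey 0 (C + 1) (by omega) (by omega) hC1.1]
    simp [show ¬ (C + 1 ≤ 0) by omega]
  -- membership values for arbitrary points
  have mem1v : ∀ y : ZMod (2 * n), (y - (a + 1)).val =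
      if 1 ≤ (y - a).val then (y - a).val - 1 else (y - a).val + (2 * n - 1) := by
    intro y
    rw [show y - (a + 1) = (y - a) - 1 by ring, hsub, v1,
      hkey (y - a).val 1 (hvlt _) (by omega) (by omega)]
  have mem2v : ∀ y : ZMod (2 * n), (y - (b + 1)).val =
      if B + 1 ≤ (y - a).val then (y - a).val - (B + 1) else (y - a).val + (2 * n - (B + 1)) := by
    intro y
    rw [show y - (b + 1) = (y - a) - (b + 1 - a) by ring, hsub, hB1.2,
      hkey (y - a).val (B + 1) (hvlt _) (by omega) hB1.1]
  have mem3v : ∀ y : ZMod (2 * n), (y - (c + 1)).val =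
      if C + 1 ≤ (y - a).val then (y - a).val - (C + 1) else (y - a).val + (2 * n - (C + 1)) := by
    intro y
    rw [show y - (c + 1) = (y - a) - (c + 1 - a) by ring, hsub, hC1.2,
      hkey (y - a).val (C + 1) (hvlt _) (by omega) hC1.1]
  -- arc characterizations
  have char1 : ∀ y : ZMod (2 * n), y ∈ openArc (a + 1) b ↔ 1 < (y - a).val ∧ (y - a).val < B := by
    intro y
    simp only [openArc, Set.mem_setOf_eq, mem1v y, arc1v]
    have := hvlt (y - a)
    split <;> omega
  have char2 : ∀ y : ZMod (2 * n), y ∈ openArc (b + 1) c ↔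
      B + 1 < (y - a).val ∧ (y - a).val < C := by
    intro y
    simp only [openArc, Set.mem_setOf_eq, mem2v y, arc2v]
    have := hvlt (y - a)
    split <;> omega
  have char3 : ∀ y : ZMod (2 * n), y ∈ openArc (c + 1) a ↔ C + 1 < (y - a).val := by
    intro y
    simp only [openArc, Set.mem_setOf_eq, mem3v y, arc3v]
    have h1 := hvlt (y - a)
    have h2 := hC1.1
    split <;> omega
  -- f values on the six points
  have hfb : f b = a + 1 := by rw [← ha, hinv]
  have hfc : f c = b + 1 := by rw [← hb, hinv]
  have hfa : f a = c + 1 := by rw [← hc, hinv]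
  -- spec
  set spec : ZMod (2 * n) → Prop := fun y =>
    y = a ∨ y = a + 1 ∨ y = b ∨ y = b + 1 ∨ y = c ∨ y = c + 1 with hspecdef
  have hfspec : ∀ y, spec y → spec (f y) := by
    intro y hy
    rcases hy with rfl | rfl | rfl | rfl | rfl | rfl <;>
      simp [hspecdef, hfa, hfb, hfc, ha, hb, hc]
  have hspecT : ∀ y, spec y →
      (y - a).val = 0 ∨ (y - a).val = 1 ∨ (y - a).val = B ∨ (y - a).val = B + 1 ∨
      (y - a).val = C ∨ (y - a).val = C + 1 := by
    intro y hy
    rcases hy with rfl | rfl | rfl | rfl | rfl | rfl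
    · exact Or.inl Ta
    · exact Or.inr (Or.inl Ta1)
    · exact Or.inr (Or.inr (Or.inl rfl))
    · exact Or.inr (Or.inr (Or.inr (Or.inl hB1.2)))
    · exact Or.inr (Or.inr (Or.inr (Or.inr (Or.inl rfl))))
    · exact Or.inr (Or.inr (Or.inr (Or.inr (Or.inr hC1.2))))
  have hnspecT : ∀ y, ¬ spec y →
      (y - a).val ≠ 0 ∧ (y - a).val ≠ 1 ∧ (y - a).val ≠ B ∧ (y - a).val ≠ B + 1 ∧
      (y - a).val ≠ C ∧ (y - a).val ≠ C + 1 := by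
    intro y hy
    have inj : ∀ z : ZMod (2 * n), (y - a).val = (z - a).val → y = z := by
      intro z h
      have := ZMod.val_injective (2 * n) h
      exact sub_left_injective this
    refine ⟨?_, ?_, ?_, ?_, ?_, ?_⟩ <;> intro h <;> apply hy
    · exact Or.inl (inj a (by rw [Ta, h]))
    · exact Or.inr (Or.inl (inj (a + 1) (by rw [Ta1, h])))
    · exact Or.inr (Or.inr (Or.inl (inj b (by rw [← hBdef, h]))))
    · exact Or.inr (Or.inr (Or.inr (Or.inl (inj (b + 1) (by rw [hB1.2, h])))))
    · exact Or.inr (Or.inr (Or.inr (Or.inr (Or.inl (inj c (by rw [← hCdef, h]))))))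
    · exact Or.inr (Or.inr (Or.inr (Or.inr (Or.inr (inj (c + 1) (by rw [hC1.2, h]))))))
  -- counting package for each point
  have esum : ∀ y : ZMod (2 * n),
      ((if 1 < (y - a).val ∧ (y - a).val < B then 1 else 0) +
       (if B + 1 < (y - a).val ∧ (y - a).val < C then 1 else 0) +
       (if C + 1 < (y - a).val then 1 else 0) : ℕ) = if spec y then 0 else 1 := by
    intro y
    by_cases hy : spec y
    · have h6 := hspecT y hy
      simp only [hy, if_true]
      have h1 := hvlt (y - a)
      split_ifs <;> omega
    · have h6 := hnspecT y hy
      simp only [hy, if_false]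
      have h1 := hvlt (y - a)
      split_ifs <;> omega
  -- the crux pointwise lemma
  have crux : ∀ x : ZMod (2 * n),
      Even ((if Linked f (a + 1) x then 1 else 0) + (if Linked f (b + 1) x then 1 else 0) +
        (if Linked f (c + 1) x then 1 else 0) : ℕ) := by
    intro x
    have hL1 : Linked f (a + 1) x =
        Xor' (1 < (x - a).val ∧ (x - a).val < B) (1 < (f x - a).val ∧ (f x - a).val < B) := by
      simp only [Linked, ha, char1]
    have hL2 : Linked f (b + 1) x =
        Xor' (B + 1 < (x - a).val ∧ (x - a).val < C)
          (B + 1 < (f x - a).val ∧ (f x - a).val < C) := by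
      simp only [Linked, hb, char2]
    have hL3 : Linked f (c + 1) x =
        Xor' (C + 1 < (x - a).val) (C + 1 < (f x - a).val) := by
      simp only [Linked, hc, char3]
    rw [hL1, hL2, hL3]
    have hspeceq : (if spec x then (0:ℕ) else 1) = (if spec (f x) then 0 else 1) := by
      by_cases hx : spec x
      · simp [hx, hfspec x hx]
      · have : ¬ spec (f x) := fun h => hx (by simpa [hinv x] using hfspec (f x) h)
        simp [hx, this]
    have e1 := esum x
    have e2 := esum (f x)
    rw [← hspeceq] at e2
    exact crux_abs _ _ _ _ _ _ _ _ _ _ _ _ _ _ _ (e1.trans e2.symm)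
  -- now the global count
  have hfin : ∀ p : ZMod (2 * n),
      {d : Set (ZMod (2 * n)) | ∃ x, d = {x, f x} ∧ Linked f p x}.Finite :=
    fun p => Set.toFinite _
  have hLsum : ∀ p : ZMod (2 * n), linkedCount f p =
      ∑ d : Set (ZMod (2 * n)), (if ∃ x, d = {x, f x} ∧ Linked f p x then 1 else 0) := by
    intro p
    rw [linkedCount, Set.ncard_eq_toFinset_card _ (hfin p)]
    rw [show (hfin p).toFinset = Finset.univ.filter
        (fun d => ∃ x, d = {x, f x} ∧ Linked f p x) by ext d; simp]
    rw [Finset.card_filter]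
  have key : Even (linkedCount f (a + 1) + linkedCount f (b + 1) + linkedCount f (c + 1)) := by
    rw [hLsum, hLsum, hLsum, ← Finset.sum_add_distrib, ← Finset.sum_add_distrib]
    apply Finset.even_sum
    intro d _
    by_cases hd : ∃ x, d = ({x, f x} : Set (ZMod (2 * n)))
    · obtain ⟨x, rfl⟩ := hd
      have hmem : ∀ p : ZMod (2 * n),
          (∃ y, ({x, f x} : Set (ZMod (2 * n))) = {y, f y} ∧ Linked f p y) ↔ Linked f p x := by
        intro p
        constructor
        · rintro ⟨y, hy, hL⟩
          have hyx : y = x ∨ y = f x := by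
            have : y ∈ ({x, f x} : Set (ZMod (2 * n))) := by
              rw [hy]; exact Set.mem_insert _ _
            simpa using this
          rcases hyx with rfl | rfl
          · exact hL
          · simp only [Linked, hinv x] at hL ⊢
            exact hL.symm
        · intro hL; exact ⟨x, rfl, hL⟩
      simp only [hmem]
      exact crux x
    · have h0 : ∀ p : ZMod (2 * n),
          ¬ (∃ y, d = ({y, f y} : Set (ZMod (2 * n))) ∧ Linked f p y) := by
        intro p ⟨y, hy, _⟩
        exact hd ⟨y, hy⟩
      simp [h0]
  rw [Nat.even_iff] at key ⊢
  omega
end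

section
/- Let f be a two-component chord diagram on ZMod (2n) ⊕ ZMod (2m) (n ≥ 2, m ≥ 1) such that, on the K-circle, f x = y + 1 and f (x+1) = y for four pairwise distinct points x, x+1, y, y+1 of the K-circle. Then the two pure chords {x, y+1} and {x+1, y} of K satisfy p_L({x, y+1}) = p_L({x+1, y}): the numbers of K-endpoints of mixed chords in the open arc from x to y+1 and in the open arc from x+1 to y have the same parity. (This verifies, for the parity p_L, the axiom that the two crossings of K involved in a second Reidemeister move have the same parity.) -/
/-- For a two-component chord diagram given by a fixed-point-free involution `f` on
`ZMod N ⊕ ZMod M` (the first summand being the circle of the component `K`, the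
second that of `L`), the number of `K`-endpoints of mixed chords lying in the open
arc of the `K`-circle from `u` to `v`. -/
noncomputable def mixedEndpointsInArc {N M : ℕ}
    (f : ZMod N ⊕ ZMod M → ZMod N ⊕ ZMod M) (u v : ZMod N) : ℕ :=
  Set.ncard {p : ZMod N | p ∈ openArc u v ∧ (f (Sum.inl p)).isRight = true}

/-- The two pure chords `{x, y+1}` and `{x+1, y}` of the component `K` (the two
crossings of `K` involved in a second Reidemeister move) have the same parity `p_L`:
the numbers of `K`-endpoints of mixed chords in the open arc from `x` to `y+1` and in
the open arc from `x+1` to `y` have the same parity. -/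
theorem pL_second_reidemeister (n m : ℕ) (hn : 2 ≤ n) (hm : 1 ≤ m)
    (f : ZMod (2 * n) ⊕ ZMod (2 * m) → ZMod (2 * n) ⊕ ZMod (2 * m))
    (hinv : Function.Involutive f) (hfpf : ∀ x, f x ≠ x)
    (x y : ZMod (2 * n))
    (h1 : f (Sum.inl x) = Sum.inl (y + 1)) (h2 : f (Sum.inl (x + 1)) = Sum.inl y)
    (hdist : [x, x + 1, y, y + 1].Pairwise (· ≠ ·)) :
    mixedEndpointsInArc f x (y + 1) % 2 = mixedEndpointsInArc f (x + 1) y % 2 := by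
  simp only [List.pairwise_cons, List.mem_cons, List.mem_singleton, List.not_mem_nil] at hdist
  obtain ⟨hA, hB, hC, -⟩ := hdist
  have hxy1 : x ≠ y + 1 := hA _ (by simp)
  have hxy : x ≠ y := hA _ (by simp)
  have hx1y : x + 1 ≠ y := hB _ (by simp)
  have hN4 : 4 ≤ 2 * n := by omega
  haveI : NeZero (2 * n) := ⟨by omega⟩
  haveI : Fact (1 < 2 * n) := ⟨by omega⟩
  set d := (y + 1 - x).val with hd
  have hdlt : d < 2 * n := ZMod.val_lt _
  have hval1 : (1 : ZMod (2 * n)).val = 1 := ZMod.val_one _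
  have hd3 : 3 ≤ d := by
    by_contra h
    have he : ((d : ℕ) : ZMod (2 * n)) = y + 1 - x := by
      rw [hd]; simp [ZMod.natCast_val, ZMod.cast_id]
    interval_cases d
    · exact hxy1 (by push_cast at he; linear_combination he)
    · exact hxy (by push_cast at he; linear_combination he)
    · exact hx1y (by push_cast at he; linear_combination he)
  have hdy : (y - x).val = d - 1 := by
    have heq : y - x = (y + 1 - x) - 1 := by ring
    rw [heq, ZMod.val_sub (by rw [hval1]; omega), hval1]
  have hdyx1 : (y - (x + 1)).val = d - 2 := by
    have h2' : ((2 : ZMod (2 * n))).val = 2 := by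
      have : ((2 : ℕ) : ZMod (2 * n)).val = 2 := ZMod.val_cast_of_lt (by omega)
      simpa using this
    have heq : y - (x + 1) = (y + 1 - x) - 2 := by ring
    rw [heq, ZMod.val_sub (by rw [h2']; omega), h2']
  have hsets : {p : ZMod (2 * n) | p ∈ openArc x (y + 1) ∧ (f (Sum.inl p)).isRight = true}
      = {p : ZMod (2 * n) | p ∈ openArc (x + 1) y ∧ (f (Sum.inl p)).isRight = true} := by
    ext p
    simp only [Set.mem_setOf_eq, openArc, and_congr_left_iff]
    intro hmix
    have hpx1 : p ≠ x + 1 := by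
      rintro rfl; rw [h2] at hmix; simp at hmix
    have hpy : p ≠ y := by
      intro h
      have hy : f (Sum.inl y) = Sum.inl (x + 1) := by
        have := hinv (Sum.inl (x + 1)); rw [h2] at this; exact this
      rw [h, hy] at hmix; simp at hmix
    set t := (p - x).val with ht
    have htlt : t < 2 * n := ZMod.val_lt _
    have ht1 : t ≠ 1 := by
      intro h
      apply hpx1
      have he : ((t : ℕ) : ZMod (2 * n)) = p - x := by
        rw [ht]; simp [ZMod.natCast_val, ZMod.cast_id]
      rw [h] at he; push_cast at he; linear_combination -he
    have htd1 : t ≠ d - 1 := by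
      intro h
      apply hpy
      have : (p - x).val = (y - x).val := by rw [← ht, hdy, h]
      have := ZMod.val_injective _ this
      linear_combination this
    have hsub : 1 ≤ t → (p - (x + 1)).val = t - 1 := by
      intro h
      have heq : p - (x + 1) = (p - x) - 1 := by ring
      rw [heq, ZMod.val_sub (by rw [hval1]; omega), hval1]
    constructor
    · rintro ⟨h0, hlt⟩
      rw [hsub (by omega), hdyx1]
      omega
    · rintro ⟨h0, hlt⟩
      rw [hdyx1] at hlt
      rcases Nat.eq_zero_or_pos t with h | h
      · exfalso
        have hpx : p - x = 0 := (ZMod.val_eq_zero (p - x)).mp h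
        have : (p - (x + 1)).val = 2 * n - 1 := by
          have heq : p - (x + 1) = -1 := by
            have : p = x := by linear_combination hpx
            rw [this]; ring
          rw [heq]
          have hm1 : ((-1 : ZMod (2 * n))).val = 2 * n - 1 := by
            have := ZMod.val_cast_of_lt (n := 2 * n) (a := 2 * n - 1) (by omega)
            rw [← this]
            congr 1
            have : ((2 * n - 1 : ℕ) : ZMod (2 * n)) + 1 = 0 := by
              have ha : ((2 * n - 1 : ℕ) : ZMod (2 * n)) + 1 = ((2 * n - 1 + 1 : ℕ) : ZMod (2 * n)) := by
                push_cast; ring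
              have hb : 2 * n - 1 + 1 = 2 * n := by omega
              rw [ha, hb]; simp
            linear_combination -this
          exact hm1
        omega
      · rw [hsub h] at h0 hlt
        omega
  unfold mixedEndpointsInArc
  rw [hsets]
end

section
/- Let f be a two-component chord diagram on ZMod (2n) ⊕ ZMod (2m) (n ≥ 2, m ≥ 1). Suppose x, x+1, y, y+1 are four pairwise distinct points of the K-circle occurring in this cyclic order, z, z+1 are two distinct points of the L-circle, and f (x+1) = y (a pure chord P of K), f x = z (a mixed chord), f (y+1) = z + 1 (a mixed chord). Let f' be the fixed-point-free involution agreeing with f outside {x, x+1, y, y+1, z, z+1} and satisfying f' x = y + 1, f' (x+1) = z + 1, f' y = z. Then the parity p_L of the pure chord {x+1, y} of K in f equals the parity p_L of the corresponding pure chord {x, y+1} of K in f'. (This verifies axiom c for p_L: a special third Reidemeister move, involving one pure crossing of K and two mixed crossings, does not change the parity of the pure crossing of K.) -/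
/-- A special third Reidemeister move, involving one pure crossing of the component `K`
and two mixed crossings, does not change the parity `p_L` of the pure crossing of `K`:
on the chord-diagram level the chords `{x+1, y}` (pure in `K`), `{x, z}`, `{y+1, z+1}`
(mixed) are replaced by `{x, y+1}`, `{x+1, z+1}`, `{y, z}`, and the parity `p_L` of the
pure chord `{x+1, y}` in `f` equals the parity `p_L` of the pure chord `{x, y+1}` in `f'`. -/
theorem pL_special_third_reidemeister (n m : ℕ) (hn : 2 ≤ n) (hm : 1 ≤ m)
    (f : ZMod (2 * n) ⊕ ZMod (2 * m) → ZMod (2 * n) ⊕ ZMod (2 * m))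
    (hinv : Function.Involutive f) (hfpf : ∀ x, f x ≠ x)
    (x y : ZMod (2 * n)) (z : ZMod (2 * m))
    (hcyc : 1 < (y - x).val ∧ (y - x).val < (y + 1 - x).val)
    (hz : z ≠ z + 1)
    (h1 : f (Sum.inl (x + 1)) = Sum.inl y)
    (h2 : f (Sum.inl x) = Sum.inr z)
    (h3 : f (Sum.inl (y + 1)) = Sum.inr (z + 1))
    (f' : ZMod (2 * n) ⊕ ZMod (2 * m) → ZMod (2 * n) ⊕ ZMod (2 * m))
    (hinv' : Function.Involutive f') (hfpf' : ∀ w, f' w ≠ w)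
    (hout : ∀ w, w ∉ ({Sum.inl x, Sum.inl (x + 1), Sum.inl y, Sum.inl (y + 1),
        Sum.inr z, Sum.inr (z + 1)} : Set (ZMod (2 * n) ⊕ ZMod (2 * m))) → f' w = f w)
    (h1' : f' (Sum.inl x) = Sum.inl (y + 1))
    (h2' : f' (Sum.inl (x + 1)) = Sum.inr (z + 1))
    (h3' : f' (Sum.inl y) = Sum.inr z) :
    mixedEndpointsInArc f (x + 1) y % 2 = mixedEndpointsInArc f' x (y + 1) % 2 := by

  classical
  haveI : NeZero (2 * n) := ⟨by omega⟩
  haveI : Fact (1 < 2 * n) := ⟨by omega⟩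
  set d := (y - x).val with hd
  have hdN : d < 2 * n := ZMod.val_lt _
  have hval1 : (1 : ZMod (2 * n)).val = 1 := ZMod.val_one _
  have hadd1 : ∀ a : ZMod (2 * n), (a + 1).val = (a.val + 1) % (2 * n) := by
    intro a; rw [ZMod.val_add, hval1]
  have hmod : ∀ s : ℕ, s < 2 * n → (s + 1) % (2 * n) = s + 1 ∨ (s + 1) % (2 * n) = 0 := by
    intro s hs
    rcases Nat.lt_or_ge (s + 1) (2 * n) with h | h
    · exact Or.inl (Nat.mod_eq_of_lt h)
    · right
      have : s + 1 = 2 * n := by omega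
      rw [this]; simp
  have hD : (y + 1 - x).val = d + 1 := by
    have he : y + 1 - x = (y - x) + 1 := by ring
    have h2 := hcyc.2
    rw [he, hadd1, ← hd] at h2 ⊢
    rcases hmod d hdN with h | h <;> omega
  have hd2 : 2 ≤ d := hcyc.1
  have hdN2 : d + 1 < 2 * n := by rw [← hD]; exact ZMod.val_lt _
  have hvx1 : (x + 1 - x).val = 1 := by
    have : x + 1 - x = 1 := by ring
    rw [this, hval1]
  have hsm : (y - (x + 1)).val = d - 1 := by
    have he : y - x = (y - (x + 1)) + 1 := by ring
    have h0 := hadd1 (y - (x + 1))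
    rw [← he, ← hd] at h0
    have hlt := ZMod.val_lt (y - (x + 1))
    rcases hmod _ hlt with h | h <;> omega
  have hshift : ∀ p : ZMod (2 * n), (p - x).val = ((p - (x + 1)).val + 1) % (2 * n) := by
    intro p
    have he : p - x = (p - (x + 1)) + 1 := by ring
    rw [he, hadd1]
  have hvalinj : ∀ a b : ZMod (2 * n), a.val = b.val → a = b := fun a b h =>
    ZMod.val_injective _ h
  have hinterior : ∀ p : ZMod (2 * n), 2 ≤ (p - x).val → (p - x).val ≤ d - 1 →
      f' (Sum.inl p) = f (Sum.inl p) := by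
    intro p hp1 hp2
    apply hout
    intro hmem
    simp only [Set.mem_insert_iff, Set.mem_singleton_iff] at hmem
    rcases hmem with h | h | h | h | h | h
    · rw [Sum.inl.injEq] at h; subst h
      rw [sub_self, ZMod.val_zero] at hp1; omega
    · rw [Sum.inl.injEq] at h; subst h
      rw [hvx1] at hp1; omega
    · rw [Sum.inl.injEq] at h; subst h; omega
    · rw [Sum.inl.injEq] at h; subst h
      rw [hD] at hp2; omega
    · exact absurd h (by simp)
    · exact absurd h (by simp)
  have hset : {p : ZMod (2 * n) | p ∈ openArc x (y + 1) ∧ (f' (Sum.inl p)).isRight = true}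
      = insert (x + 1) (insert y
        {p : ZMod (2 * n) | p ∈ openArc (x + 1) y ∧ (f (Sum.inl p)).isRight = true}) := by
    ext p
    simp only [Set.mem_setOf_eq, Set.mem_insert_iff, openArc, hD, hsm, ← hd]
    constructor
    · rintro ⟨⟨hp1, hp2⟩, hmix⟩
      by_cases ht1 : (p - x).val = 1
      · left
        have : p - x = x + 1 - x := hvalinj _ _ (by rw [ht1, hvx1])
        linear_combination this
      · by_cases htd : (p - x).val = d
        · right; left
          have : p - x = y - x := hvalinj _ _ (by rw [htd, ← hd])
          linear_combination this
        · right; right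
          have ht2 : 2 ≤ (p - x).val := by omega
          have htd1 : (p - x).val ≤ d - 1 := by omega
          have hs := hshift p
          have hsval := ZMod.val_lt (p - (x + 1))
          rcases hmod _ hsval with h | h
          · refine ⟨⟨by omega, by omega⟩, ?_⟩
            rw [← hinterior p ht2 htd1]; exact hmix
          · omega
    · rintro (h | h | ⟨⟨hp1, hp2⟩, hmix⟩)
      · subst h
        exact ⟨⟨by rw [hvx1]; omega, by rw [hvx1]; omega⟩, by rw [h2']; rfl⟩
      · subst h
        exact ⟨⟨by rw [← hd]; omega, by rw [← hd]; omega⟩, by rw [h3']; rfl⟩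
      · have hs := hshift p
        have hmodeq : ((p - (x + 1)).val + 1) % (2 * n) = (p - (x + 1)).val + 1 :=
          Nat.mod_eq_of_lt (by omega)
        have ht2 : 2 ≤ (p - x).val := by omega
        have htd1 : (p - x).val ≤ d - 1 := by omega
        refine ⟨⟨by omega, by omega⟩, ?_⟩
        rw [hinterior p ht2 htd1]; exact hmix
  have hxy : x + 1 ≠ y := by
    intro h
    have : (x + 1 - x).val = (y - x).val := by rw [h]
    rw [hvx1, ← hd] at this; omega
  have hx1notin : (x + 1) ∉ {p : ZMod (2 * n) | p ∈ openArc (x + 1) y ∧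
      (f (Sum.inl p)).isRight = true} := by
    intro h
    have := h.1.1
    rw [sub_self, ZMod.val_zero] at this
    omega
  have hynotin : y ∉ {p : ZMod (2 * n) | p ∈ openArc (x + 1) y ∧
      (f (Sum.inl p)).isRight = true} := by
    intro h
    exact absurd h.1.2 (lt_irrefl _)
  unfold mixedEndpointsInArc
  rw [hset, Set.ncard_insert_of_notMem (by
      simp only [Set.mem_insert_iff, not_or]
      exact ⟨hxy, hx1notin⟩) (Set.toFinite _),
    Set.ncard_insert_of_notMem hynotin (Set.toFinite _)]
  omega
end

section
/- Let f be a two-component chord diagram on ZMod (2n) ⊕ ZMod (2m) (n, m ≥ 1) containing a pair of parallel mixed chords {x, z+1} and {x+1, z}, where x, x+1 are adjacent points of the K-circle and z, z+1 are adjacent points of the L-circle (that is, f x = z + 1 and f (x+1) = z across the two circles). Then for every pure chord v = {p, f p} of K with p, f p ∉ {x, x+1}: the point x lies in the open arc of K from p to f p if and only if x+1 does. Consequently, deleting the two mixed chords (and their four endpoints, preserving the cyclic orders) leaves the parity p_L(v) of every pure chord of K unchanged. (This verifies axiom b for p_L: a mixed second Reidemeister move does not change the parity of the crossings of K.) -/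
/-- Relabelling of the circle `ZMod N` onto `ZMod K` after the deletion of the two
adjacent points `s - 2`, `s - 1`: the remaining points `s, s+1, …` keep their cyclic
order and are relabelled `0, 1, …` starting from `s`. -/
def relabel {N K : ℕ} (s : ZMod N) (w : ZMod N) : ZMod K := ((w - s).val : ZMod K)

private lemma modsub (N u v : ℕ) (hu : u < N) (hv : v ≤ N) :
    (u + (N - v)) % N = if v ≤ u then u - v else u + N - v := by
  split
  · next h =>
    have h1 : u + (N - v) = N + (u - v) := by omega
    rw [h1, Nat.add_mod_left, Nat.mod_eq_of_lt (by omega)]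
  · next h =>
    rw [Nat.mod_eq_of_lt (by omega)]
    omega

private lemma cast_val_self {N : ℕ} [NeZero N] (w : ZMod N) :
    ((w.val : ℕ) : ZMod N) = w := by
  rw [ZMod.natCast_val, ZMod.cast_id]

private lemma val_sub_formula {N : ℕ} [NeZero N] (s w p : ZMod N) :
    (w - p).val = ((w - s).val + (N - (p - s).val)) % N := by
  set a := (w - s).val with ha
  set ap := (p - s).val with hap
  have hapN : ap ≤ N := le_of_lt (ZMod.val_lt _)
  have hNap : ((N - ap : ℕ) : ZMod N) = -((ap : ℕ) : ZMod N) := by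
    rw [eq_neg_iff_add_eq_zero, ← Nat.cast_add]
    have h : (N - ap) + ap = N := by omega
    rw [h, ZMod.natCast_self]
  have key : ((a + (N - ap) : ℕ) : ZMod N) = w - p := by
    rw [Nat.cast_add, hNap, ha, hap, cast_val_self, cast_val_self]
    ring
  rw [← key, ZMod.val_natCast]

private lemma sub_val_inj {N : ℕ} [NeZero N] (s w1 w2 : ZMod N)
    (h : (w1 - s).val = (w2 - s).val) : w1 = w2 := by
  have h2 := congrArg (fun t : ℕ => ((t : ℕ) : ZMod N)) h
  simp only [cast_val_self] at h2
  exact sub_left_inj.mp h2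

private lemma arc_relabel {N K : ℕ} [NeZero N] [NeZero K] (hNK : N = K + 2)
    (s p q w : ZMod N) (hp : (p - s).val < K) (hq : (q - s).val < K)
    (hw : (w - s).val < K) :
    w ∈ openArc p q ↔
      (relabel s w : ZMod K) ∈ openArc (relabel s p) (relabel s q) := by
  unfold openArc relabel
  simp only [Set.mem_setOf_eq]
  set a := (w - s).val with ha
  set ap := (p - s).val with hap
  set aq := (q - s).val with haq
  have hNw : (w - p).val = (a + (N - ap)) % N := val_sub_formula s w p
  have hNq : (q - p).val = (aq + (N - ap)) % N := val_sub_formula s q p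
  have hKw : (((a : ℕ) : ZMod K) - ((ap : ℕ) : ZMod K)).val = (a + (K - ap)) % K := by
    have h := val_sub_formula (0 : ZMod K) ((a : ℕ) : ZMod K) ((ap : ℕ) : ZMod K)
    rwa [sub_zero, sub_zero, ZMod.val_cast_of_lt hw, ZMod.val_cast_of_lt hp] at h
  have hKq : (((aq : ℕ) : ZMod K) - ((ap : ℕ) : ZMod K)).val = (aq + (K - ap)) % K := by
    have h := val_sub_formula (0 : ZMod K) ((aq : ℕ) : ZMod K) ((ap : ℕ) : ZMod K)
    rwa [sub_zero, sub_zero, ZMod.val_cast_of_lt hq, ZMod.val_cast_of_lt hp] at h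
  rw [hNw, hNq, hKw, hKq]
  rw [modsub N a ap (by omega) (by omega), modsub N aq ap (by omega) (by omega),
    modsub K a ap (by omega) (by omega), modsub K aq ap (by omega) (by omega)]
  split_ifs <;> omega

/-- A mixed second Reidemeister move does not change the parity `p_L` of the pure
crossings of `K`: if a two-component chord diagram contains a pair of parallel mixed
chords `{x, z+1}`, `{x+1, z}` with `x, x+1` adjacent on the `K`-circle and `z, z+1`
adjacent on the `L`-circle, then for every pure chord `{p, q}` of `K` avoiding
`x, x+1`, the point `x` lies in the open arc from `p` to `q` iff `x+1` does; and
deleting the two mixed chords together with their four endpoints (preserving the cyclic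
orders) leaves the parity `p_L` of every pure chord of `K` unchanged. -/
theorem pL_mixed_second_reidemeister (n m : ℕ) (hn : 1 ≤ n) (hm : 1 ≤ m)
    (f : ZMod (2 * n) ⊕ ZMod (2 * m) → ZMod (2 * n) ⊕ ZMod (2 * m))
    (hinv : Function.Involutive f) (hfpf : ∀ w, f w ≠ w)
    (x : ZMod (2 * n)) (z : ZMod (2 * m))
    (h1 : f (Sum.inl x) = Sum.inr (z + 1)) (h2 : f (Sum.inl (x + 1)) = Sum.inr z)
    (f' : ZMod (2 * n - 2) ⊕ ZMod (2 * m - 2) → ZMod (2 * n - 2) ⊕ ZMod (2 * m - 2))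
    (hf' : ∀ w : ZMod (2 * n) ⊕ ZMod (2 * m),
      w ≠ Sum.inl x → w ≠ Sum.inl (x + 1) → w ≠ Sum.inr z → w ≠ Sum.inr (z + 1) →
      f' (Sum.map (relabel (x + 2)) (relabel (z + 2)) w) =
        Sum.map (relabel (x + 2)) (relabel (z + 2)) (f w)) :
    ∀ p q : ZMod (2 * n), f (Sum.inl p) = Sum.inl q →
      p ≠ x → p ≠ x + 1 → q ≠ x → q ≠ x + 1 →
      ((x ∈ openArc p q ↔ x + 1 ∈ openArc p q) ∧
        mixedEndpointsInArc f' (relabel (x + 2) p) (relabel (x + 2) q) % 2 =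
          mixedEndpointsInArc f p q % 2) := by
  intro p q hpq hp1 hp2 hq1 hq2
  haveI : NeZero (2 * n) := ⟨by omega⟩
  rcases Nat.lt_or_ge n 2 with hn2 | hn2
  · exfalso
    obtain rfl : n = 1 := by omega
    have hval := ZMod.val_lt (p - x)
    have h0 : (p - x).val = 0 ∨ (p - x).val = 1 := by omega
    rcases h0 with h0 | h0
    · exact hp1 (sub_eq_zero.mp ((ZMod.val_eq_zero _).mp h0))
    · have hcast : ((p - x).val : ZMod (2 * 1)) = p - x := cast_val_self _
      rw [h0] at hcast
      push_cast at hcast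
      exact hp2 (sub_eq_iff_eq_add'.mp hcast.symm)
  · haveI : NeZero (2 * n - 2) := ⟨by omega⟩
    have hNK : 2 * n = (2 * n - 2) + 2 := by omega
    have hxne : x ≠ x + 1 := by
      haveI : Fact (1 < 2 * n) := ⟨by omega⟩
      intro h
      exact one_ne_zero (left_eq_add.mp h)
    have part1 : x ∈ openArc p q ↔ x + 1 ∈ openArc p q := by
      unfold openArc
      simp only [Set.mem_setOf_eq]
      set a := (x - p).val with ha
      set d := (q - p).val with hd
      have haN : a < 2 * n := ZMod.val_lt _
      have hdN : d < 2 * n := ZMod.val_lt _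
      have ha0 : a ≠ 0 := by
        intro h
        exact hp1 (sub_eq_zero.mp ((ZMod.val_eq_zero _).mp h)).symm
      have had : a ≠ d := by
        intro h
        exact hq1 (sub_val_inj p x q h).symm
      have hx1 : (x + 1 - p).val = (a + 1) % (2 * n) := by
        have hc : ((a + 1 : ℕ) : ZMod (2 * n)) = x + 1 - p := by
          push_cast
          rw [ha, cast_val_self]
          ring
        rw [← hc, ZMod.val_natCast]
      have hx10 : (a + 1) % (2 * n) ≠ 0 := by
        rw [← hx1]
        intro h
        exact hp2 (sub_eq_zero.mp ((ZMod.val_eq_zero _).mp h)).symm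
      have hx1d : (a + 1) % (2 * n) ≠ d := by
        rw [← hx1]
        intro h
        exact hq2 (sub_val_inj p (x + 1) q h).symm
      have haN1 : a + 1 < 2 * n := by
        rcases Nat.lt_or_ge (a + 1) (2 * n) with h | h
        · exact h
        · exfalso
          have he : a + 1 = 2 * n := by omega
          rw [he, Nat.mod_self] at hx10
          exact hx10 rfl
      rw [Nat.mod_eq_of_lt haN1] at hx10 hx1d
      rw [hx1, Nat.mod_eq_of_lt haN1]
      omega
    refine ⟨part1, ?_⟩
    have hxs : (x - (x + 2)).val = 2 * n - 2 := by
      have hcast : ((2 * n - 2 : ℕ) : ZMod (2 * n)) = x - (x + 2) := by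
        have h0 : ((2 * n - 2 : ℕ) : ZMod (2 * n)) + 2 = 0 := by
          have hadd : ((2 * n - 2 : ℕ) : ZMod (2 * n)) + ((2 : ℕ) : ZMod (2 * n))
              = (((2 * n - 2) + 2 : ℕ) : ZMod (2 * n)) := (Nat.cast_add _ _).symm
          rw [show (2 * n - 2) + 2 = 2 * n from by omega, ZMod.natCast_self] at hadd
          push_cast at hadd
          exact hadd
        linear_combination h0
      rw [← hcast, ZMod.val_cast_of_lt (by omega)]
    have hx1s : (x + 1 - (x + 2)).val = 2 * n - 1 := by
      have hcast : ((2 * n - 1 : ℕ) : ZMod (2 * n)) = x + 1 - (x + 2) := by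
        have h0 : ((2 * n - 1 : ℕ) : ZMod (2 * n)) + 1 = 0 := by
          have hadd : ((2 * n - 1 : ℕ) : ZMod (2 * n)) + ((1 : ℕ) : ZMod (2 * n))
              = (((2 * n - 1) + 1 : ℕ) : ZMod (2 * n)) := (Nat.cast_add _ _).symm
          rw [show (2 * n - 1) + 1 = 2 * n from by omega, ZMod.natCast_self] at hadd
          push_cast at hadd
          exact hadd
        linear_combination h0
      rw [← hcast, ZMod.val_cast_of_lt (by omega)]
    have hcoord : ∀ w : ZMod (2 * n), (w - (x + 2)).val < 2 * n - 2 ↔ (w ≠ x ∧ w ≠ x + 1) := by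
      intro w
      have hwN : (w - (x + 2)).val < 2 * n := ZMod.val_lt _
      constructor
      · intro h
        refine ⟨fun hw => ?_, fun hw => ?_⟩
        · rw [hw, hxs] at h; omega
        · rw [hw, hx1s] at h; omega
      · rintro ⟨h1', h2'⟩
        have e1 : (w - (x + 2)).val ≠ 2 * n - 2 := fun h =>
          h1' (sub_val_inj (x + 2) w x (by rw [h, hxs]))
        have e2 : (w - (x + 2)).val ≠ 2 * n - 1 := fun h =>
          h2' (sub_val_inj (x + 2) w (x + 1) (by rw [h, hx1s]))
        omega
    have hpK : (p - (x + 2)).val < 2 * n - 2 := (hcoord p).mpr ⟨hp1, hp2⟩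
    have hqK : (q - (x + 2)).val < 2 * n - 2 := (hcoord q).mpr ⟨hq1, hq2⟩
    have hgright : ∀ w : ZMod (2 * n), w ≠ x → w ≠ x + 1 →
        (f' (Sum.inl (relabel (x + 2) w : ZMod (2 * n - 2)))).isRight
          = (f (Sum.inl w)).isRight := by
      intro w hw1 hw2
      have h := hf' (Sum.inl w) (by simpa using hw1) (by simpa using hw2) (by simp) (by simp)
      rw [Sum.map_inl] at h
      rw [h, Sum.isRight_map]
    set A : Set (ZMod (2 * n)) :=
      {w : ZMod (2 * n) | w ∈ openArc p q ∧ (f (Sum.inl w)).isRight = true} with hA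
    set B : Set (ZMod (2 * n - 2)) :=
      {w' : ZMod (2 * n - 2) | w' ∈ openArc (relabel (x + 2) p) (relabel (x + 2) q) ∧
        (f' (Sum.inl w')).isRight = true} with hB
    have hBA : B = (relabel (x + 2) : ZMod (2 * n) → ZMod (2 * n - 2)) '' (A \ {x, x + 1}) := by
      ext w'
      constructor
      · rintro ⟨harc, hright⟩
        have hvlt : w'.val < 2 * n := lt_of_lt_of_le (ZMod.val_lt w') (by omega)
        have hws : ((x + 2) + (w'.val : ZMod (2 * n)) - (x + 2)).val = w'.val := by
          rw [add_sub_cancel_left, ZMod.val_cast_of_lt hvlt]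
        have hwK : ((x + 2) + (w'.val : ZMod (2 * n)) - (x + 2)).val < 2 * n - 2 := by
          rw [hws]; exact ZMod.val_lt w'
        have hgw : (relabel (x + 2) ((x + 2) + (w'.val : ZMod (2 * n))) : ZMod (2 * n - 2)) = w' := by
          unfold relabel
          rw [hws, cast_val_self]
        obtain ⟨hwx, hwx1⟩ := (hcoord _).mp hwK
        refine ⟨(x + 2) + (w'.val : ZMod (2 * n)), ⟨⟨?_, ?_⟩, ?_⟩, hgw⟩
        · rw [arc_relabel hNK (x + 2) p q _ hpK hqK hwK, hgw]
          exact harc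
        · rw [← hgright _ hwx hwx1, hgw]
          exact hright
        · intro hmem
          simp only [Set.mem_insert_iff, Set.mem_singleton_iff] at hmem
          rcases hmem with h | h
          · exact hwx h
          · exact hwx1 h
      · rintro ⟨w, ⟨⟨harc, hright⟩, hwnot⟩, rfl⟩
        have hwx : w ≠ x := fun h => hwnot (by simp [h])
        have hwx1 : w ≠ x + 1 := fun h => hwnot (by simp [h])
        have hwK : (w - (x + 2)).val < 2 * n - 2 := (hcoord w).mpr ⟨hwx, hwx1⟩
        refine ⟨?_, ?_⟩
        · exact (arc_relabel hNK (x + 2) p q w hpK hqK hwK).mp harc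
        · rw [hgright w hwx hwx1]
          exact hright
    have hinj : Set.InjOn (relabel (x + 2) : ZMod (2 * n) → ZMod (2 * n - 2)) (A \ {x, x + 1}) := by
      intro w1 hw1 w2 hw2 h
      have hwx1 : w1 ≠ x ∧ w1 ≠ x + 1 :=
        ⟨fun hh => hw1.2 (by simp [hh]), fun hh => hw1.2 (by simp [hh])⟩
      have hwx2 : w2 ≠ x ∧ w2 ≠ x + 1 :=
        ⟨fun hh => hw2.2 (by simp [hh]), fun hh => hw2.2 (by simp [hh])⟩
      have hK1 := (hcoord w1).mpr hwx1
      have hK2 := (hcoord w2).mpr hwx2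
      have h' : (((w1 - (x + 2)).val : ℕ) : ZMod (2 * n - 2))
          = (((w2 - (x + 2)).val : ℕ) : ZMod (2 * n - 2)) := h
      have heq : (w1 - (x + 2)).val = (w2 - (x + 2)).val := by
        have hv := congrArg ZMod.val h'
        rwa [ZMod.val_cast_of_lt hK1, ZMod.val_cast_of_lt hK2] at hv
      exact sub_val_inj (x + 2) w1 w2 heq
    have hBcard : B.ncard = (A \ {x, x + 1}).ncard := by
      rw [hBA]
      exact Set.ncard_image_of_injOn hinj
    have hsplit : (A ∩ {x, x + 1}).ncard + (A \ {x, x + 1}).ncard = A.ncard :=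
      Set.ncard_inter_add_ncard_diff_eq_ncard A {x, x + 1} (Set.toFinite A)
    have hmB : mixedEndpointsInArc f' (relabel (x + 2) p) (relabel (x + 2) q) = B.ncard := rfl
    have hmA : mixedEndpointsInArc f p q = A.ncard := rfl
    rw [hmB, hmA, hBcard]
    by_cases hx : x ∈ openArc p q
    · have hxA : x ∈ A := ⟨hx, by rw [h1]; rfl⟩
      have hx1A : x + 1 ∈ A := ⟨part1.mp hx, by rw [h2]; rfl⟩
      have hintr : A ∩ {x, x + 1} = {x, x + 1} := by
        apply Set.inter_eq_self_of_subset_right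
        intro w hw
        simp only [Set.mem_insert_iff, Set.mem_singleton_iff] at hw
        rcases hw with rfl | rfl
        · exact hxA
        · exact hx1A
      rw [hintr, Set.ncard_pair hxne] at hsplit
      omega
    · have hx1 : x + 1 ∉ openArc p q := fun h => hx (part1.mpr h)
      have hintr : A ∩ {x, x + 1} = ∅ := by
        ext w
        simp only [Set.mem_inter_iff, Set.mem_empty_iff_false, iff_false, not_and]
        rintro ⟨harc, _⟩ hw
        simp only [Set.mem_insert_iff, Set.mem_singleton_iff] at hw
        rcases hw with rfl | rfl
        · exact hx harc
        · exact hx1 harc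
      rw [hintr, Set.ncard_empty] at hsplit
      omega
end
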